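/- arXiv:0808.3521 — 2 statements merged into one kernel-verified Lean document; each statement's English description precedes it below -/
import Mathlib

section
/- Let T and T' be simplicial trees and f : T → T' a surjective simplicial map sending each edge either onto an edge or to a single vertex, and suppose f maps geodesic paths onto geodesic paths (no folding). Let L ⊆ T and L' ⊆ T' be subtrees with f(L) = L' and f⁻¹(L') = L. Then nearest-point projection commutes with f: for every vertex u of T, f(π_L(u)) = π_{L'}(f(u)), where π_L and π_{L'} denote nearest-point projection to L and L' respectively. -/
/-!
In a tree, the nearest point `π_L(u)` of a subtree `L` is a gate: for every `y ∈ L` the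
geodesic from `u` to `y` passes through `π_L(u)`, because the geodesic from `u` to `π_L(u)`
meets `L` only at its endpoint, so it concatenates with the path from `π_L(u)` to `y` inside `L`
to a path, and paths in a tree are geodesics. Since `f` does not fold, it sends the identity
`d(u, π_L u) + d(π_L u, y) = d(u, y)` to the corresponding identity in `T'`, whence
`d(f u, f(π_L u)) ≤ d(f u, f y)`; as `f(L) = L'`, every point of `L'` is such an `f y`.
-/

namespace SimpleGraph

variable {V : Type*} {G : SimpleGraph V}

lemma IsAcyclic.length_eq_dist (hG : G.IsAcyclic) {u v : V} {p : G.Walk u v} (hp : p.IsPath) :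
    p.length = G.dist u v := by
  obtain ⟨q, hq, hlen⟩ := p.reachable.exists_path_of_dist
  have hpq : (⟨p, hp⟩ : G.Path u v) = ⟨q, hq⟩ := (hG.subsingleton_path u v).elim _ _
  rw [← hlen, show p = q from congrArg Subtype.val hpq]

lemma Walk.IsPath.append {u v w : V} {p : G.Walk u v} {q : G.Walk v w} (hp : p.IsPath)
    (hq : q.IsPath) (hpq : ∀ x ∈ p.support, x ∈ q.support → x = v) : (p.append q).IsPath := by
  rw [Walk.isPath_def, Walk.support_append]
  refine hp.support_nodup.append hq.support_nodup.tail fun x hxp hxq => ?_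
  obtain rfl := hpq x hxp (List.mem_of_mem_tail hxq)
  have hnodup := hq.support_nodup
  rw [← q.cons_tail_support] at hnodup
  exact (List.nodup_cons.mp hnodup).1 hxq

lemma Walk.eq_of_mem_support_of_length_eq_dist {u v x : V} {p : G.Walk u v}
    (hp : p.length = G.dist u v) (hx : x ∈ p.support) (hle : G.dist u v ≤ G.dist u x) :
    x = v := by
  classical
  have hsplit := congrArg Walk.length (p.take_spec hx)
  rw [Walk.length_append] at hsplit
  have hux := G.dist_le (p.takeUntil x hx)
  have hxv := G.dist_le (p.dropUntil x hx)
  exact (p.dropUntil x hx).reachable.dist_eq_zero_iff.mp (by omega)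

theorem IsAcyclic.dist_add_dist_eq_of_forall_dist_le (hG : G.IsAcyclic) {L : G.Subgraph}
    (hL : L.Connected) {u pu y : V} (hu : G.Reachable u pu) (hpu : pu ∈ L.verts)
    (hnear : ∀ z ∈ L.verts, G.dist u pu ≤ G.dist u z) (hy : y ∈ L.verts) :
    G.dist u pu + G.dist pu y = G.dist u y := by
  classical
  obtain ⟨p, hp, hplen⟩ := hu.exists_path_of_dist
  obtain ⟨q, hqL⟩ := (Subgraph.preconnected_iff_forall_exists_walk_subgraph L).mp
    hL.preconnected hpu hy
  have hq_verts : ∀ x ∈ q.bypass.support, x ∈ L.verts := fun x hx =>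
    hqL.1 (q.mem_verts_toSubgraph.mpr (q.support_bypass_subset_support hx))
  have hpq : (p.append q.bypass).IsPath :=
    hp.append q.bypass_isPath fun x hxp hxq =>
      Walk.eq_of_mem_support_of_length_eq_dist hplen hxp (hnear x (hq_verts x hxq))
  rw [← hG.length_eq_dist hpq, Walk.length_append, hplen, hG.length_eq_dist q.bypass_isPath]

end SimpleGraph

theorem projection_commutes_with_collapse_general
    {V V' : Type*} (T : SimpleGraph V) (T' : SimpleGraph V')
    (hcT : T.Connected) (haT : T.IsAcyclic)
    (f : V → V')
    (hnofold : ∀ u v x : V, T.dist u x + T.dist x v = T.dist u v →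
      T'.dist (f u) (f x) + T'.dist (f x) (f v) = T'.dist (f u) (f v))
    (L : T.Subgraph) (L' : T'.Subgraph)
    (hLc : L.Connected)
    (him : f '' L.verts = L'.verts)
    (u pu : V) (hpu : pu ∈ L.verts)
    (hnear : ∀ y ∈ L.verts, T.dist u pu ≤ T.dist u y) :
    f pu ∈ L'.verts ∧ ∀ y ∈ L'.verts, T'.dist (f u) (f pu) ≤ T'.dist (f u) y := by
  refine ⟨him ▸ Set.mem_image_of_mem f hpu, ?_⟩
  rintro _ hy'
  obtain ⟨y, hy, rfl⟩ := him.symm ▸ hy'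
  have hgate := haT.dist_add_dist_eq_of_forall_dist_le hLc (hcT u pu) hpu hnear hy
  have hfgate := hnofold u y pu hgate
  omega

/-- For a surjective simplicial no-folding map `f` between trees with `f(L) = L'` and
`f⁻¹(L') = L`, nearest-point projection commutes with `f`: the image of the nearest
point of `L` to `u` is the nearest point of `L'` to `f u`. -/
theorem projection_commutes_with_collapse
    {V V' : Type*} (T : SimpleGraph V) (T' : SimpleGraph V')
    (hcT : T.Connected) (haT : T.IsAcyclic)
    (hcT' : T'.Connected) (haT' : T'.IsAcyclic)
    (f : V → V') (hsurj : Function.Surjective f)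
    (hsimp : ∀ a b : V, T.Adj a b → f a = f b ∨ T'.Adj (f a) (f b))
    (hnofold : ∀ u v x : V, T.dist u x + T.dist x v = T.dist u v →
      T'.dist (f u) (f x) + T'.dist (f x) (f v) = T'.dist (f u) (f v))
    (L : T.Subgraph) (L' : T'.Subgraph)
    (hLc : L.Connected) (hL'c : L'.Connected)
    (him : f '' L.verts = L'.verts) (hpre : f ⁻¹' L'.verts = L.verts)
    (u pu : V) (hpu : pu ∈ L.verts)
    (hnear : ∀ y ∈ L.verts, T.dist u pu ≤ T.dist u y) :
    f pu ∈ L'.verts ∧ ∀ y ∈ L'.verts, T'.dist (f u) (f pu) ≤ T'.dist (f u) y :=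
  projection_commutes_with_collapse_general T T' hcT haT f hnofold L L' hLc him u pu hpu hnear
end

section
/- Let X be a geodesic metric space satisfying the Gromov 4-point δ-hyperbolicity condition, with basepoint x, and suppose X = A ∪ B where A and B are closed subsets. Suppose ξ is a point of the Gromov boundary that lies in both ∂A and ∂B, i.e. there are sequences (a_n) in A and (b_n) in B with a_n → ξ and b_n → ξ (Gromov products over pairs tending to infinity, including mixed products). Then ξ ∈ ∂(A ∩ B): there is a sequence (w_n) in A ∩ B converging to ξ. -/
/-- `g` parametrizes a geodesic from `a` to `b` (unit speed on `[0, dist a b]`). -/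
def IsGeodesic {X : Type*} [MetricSpace X] (a b : X) (g : ℝ → X) : Prop :=
  g 0 = a ∧ g (dist a b) = b ∧
    ∀ s ∈ Set.Icc (0 : ℝ) (dist a b), ∀ t ∈ Set.Icc (0 : ℝ) (dist a b),
      dist (g s) (g t) = |s - t|

/-- The Gromov product of `a` and `b` based at `x`. -/
noncomputable def gromovProd {X : Type*} [MetricSpace X] (x a b : X) : ℝ :=
  (dist x a + dist x b - dist a b) / 2

lemma gromovProd_comm {X : Type*} [MetricSpace X] (x a b : X) :
    gromovProd x a b = gromovProd x b a := by
  unfold gromovProd; rw [dist_comm a b]; ring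

lemma exists_mid {X : Type*} [MetricSpace X]
    (hgeo : ∀ a b : X, ∃ g, IsGeodesic a b g) (x : X)
    (A B : Set X) (hA : IsClosed A) (hB : IsClosed B) (hcover : A ∪ B = Set.univ)
    (p q : X) (hp : p ∈ A) (hq : q ∈ B) :
    ∃ w, w ∈ A ∩ B ∧ gromovProd x p w ≥ gromovProd x p q := by
  obtain ⟨g, hg0, hgd, hgiso⟩ := hgeo p q
  set d := dist p q with hd
  have hd0 : (0:ℝ) ≤ d := dist_nonneg
  have hcont : ContinuousOn g (Set.Icc 0 d) := by
    intro t ht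
    rw [Metric.continuousWithinAt_iff]
    intro ε hε
    exact ⟨ε, hε, fun s hs hst => by
      rw [hgiso s hs t ht]; simpa [Real.dist_eq] using hst⟩
  have hconn : IsPreconnected (Set.Icc (0:ℝ) d) := isPreconnected_Icc
  rw [isPreconnected_closed_iff] at hconn
  -- closed pieces
  obtain ⟨t, ht⟩ := hconn (Set.Icc 0 d ∩ g ⁻¹' A) (Set.Icc 0 d ∩ g ⁻¹' B)
    (hcont.preimage_isClosed_of_isClosed isClosed_Icc hA)
    (hcont.preimage_isClosed_of_isClosed isClosed_Icc hB)
    (by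
      intro s hs
      have : g s ∈ A ∪ B := by rw [hcover]; trivial
      rcases this with h | h
      · exact Or.inl ⟨hs, h⟩
      · exact Or.inr ⟨hs, h⟩)
    ⟨0, Set.left_mem_Icc.2 hd0, Set.left_mem_Icc.2 hd0, by simpa [hg0] using hp⟩
    ⟨d, Set.right_mem_Icc.2 hd0, Set.right_mem_Icc.2 hd0, by simpa [hgd] using hq⟩
  obtain ⟨htI, ⟨_, htA⟩, _, htB⟩ := ht
  refine ⟨g t, ⟨htA, htB⟩, ?_⟩
  have h1 : dist p (g t) = t := by
    have := hgiso 0 (Set.left_mem_Icc.2 hd0) t htI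
    rw [hg0] at this
    rw [this, abs_of_nonpos (by linarith [htI.1])]; ring
  have h2 : dist (g t) q = d - t := by
    have := hgiso t htI d (Set.right_mem_Icc.2 hd0)
    rw [hgd] at this
    rw [this, abs_of_nonpos (by linarith [htI.2])]; ring
  have h3 : dist x q ≤ dist x (g t) + (d - t) := by
    calc dist x q ≤ dist x (g t) + dist (g t) q := dist_triangle _ _ _
    _ = dist x (g t) + (d - t) := by rw [h2]
  unfold gromovProd
  rw [h1, ← hd]
  linarith

/-- If `X = A ∪ B` with `A`, `B` closed and a boundary point `ξ` is a limit of a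
sequence in `A` and of a sequence in `B` (converging to the same boundary point),
then `ξ` is a limit of a sequence in `A ∩ B`. -/
theorem boundary_point_of_union_in_intersection
    {X : Type*} [MetricSpace X] (δ : ℝ) (hδ : 0 ≤ δ)
    (hgeo : ∀ a b : X, ∃ g, IsGeodesic a b g)
    (x : X)
    (hhyp : ∀ a b c : X, gromovProd x a c ≥ min (gromovProd x a b) (gromovProd x b c) - δ)
    (A B : Set X) (hA : IsClosed A) (hB : IsClosed B) (hcover : A ∪ B = Set.univ)
    (a b : ℕ → X) (ha : ∀ n, a n ∈ A) (hb : ∀ n, b n ∈ B)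
    (haa : ∀ M : ℝ, ∃ N : ℕ, ∀ n ≥ N, ∀ m ≥ N, gromovProd x (a n) (a m) ≥ M)
    (hbb : ∀ M : ℝ, ∃ N : ℕ, ∀ n ≥ N, ∀ m ≥ N, gromovProd x (b n) (b m) ≥ M)
    (hab : ∀ M : ℝ, ∃ N : ℕ, ∀ n ≥ N, gromovProd x (a n) (b n) ≥ M) :
    ∃ w : ℕ → X, (∀ n, w n ∈ A ∩ B) ∧
      (∀ M : ℝ, ∃ N : ℕ, ∀ n ≥ N, ∀ m ≥ N, gromovProd x (w n) (w m) ≥ M) ∧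
      (∀ M : ℝ, ∃ N : ℕ, ∀ n ≥ N, ∀ m ≥ N, gromovProd x (w n) (a m) ≥ M) := by
  choose w hw hwa using fun n =>
    exists_mid hgeo x A B hA hB hcover (a n) (b n) (ha n) (hb n)
  -- key: gromovProd x (w n) (a n) ≥ gromovProd x (a n) (b n)
  have key : ∀ n, gromovProd x (w n) (a n) ≥ gromovProd x (a n) (b n) := fun n => by
    rw [gromovProd_comm]; exact hwa n
  have hWA : ∀ M : ℝ, ∃ N : ℕ, ∀ n ≥ N, ∀ m ≥ N, gromovProd x (w n) (a m) ≥ M := by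
    intro M
    obtain ⟨N1, hN1⟩ := haa (M + δ)
    obtain ⟨N2, hN2⟩ := hab (M + δ)
    refine ⟨max N1 N2, fun n hn m hm => ?_⟩
    have hn1 := le_trans (le_max_left N1 N2) hn
    have hn2 := le_trans (le_max_right N1 N2) hn
    have hm1 := le_trans (le_max_left N1 N2) hm
    have h1 : gromovProd x (w n) (a n) ≥ M + δ := le_trans (hN2 n hn2) (key n)
    have h2 : gromovProd x (a n) (a m) ≥ M + δ := hN1 n hn1 m hm1
    have := hhyp (w n) (a n) (a m)
    have hmin : min (gromovProd x (w n) (a n)) (gromovProd x (a n) (a m)) ≥ M + δ :=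
      le_min h1 h2
    linarith
  refine ⟨w, hw, ?_, hWA⟩
  intro M
  obtain ⟨N1, hN1⟩ := hWA (M + δ)
  obtain ⟨N2, hN2⟩ := hab (M + δ)
  refine ⟨max N1 N2, fun n hn m hm => ?_⟩
  have hn1 := le_trans (le_max_left N1 N2) hn
  have hm1 := le_trans (le_max_left N1 N2) hm
  have hm2 := le_trans (le_max_right N1 N2) hm
  have h1 : gromovProd x (w n) (a m) ≥ M + δ := hN1 n hn1 m hm1
  have h2 : gromovProd x (a m) (w m) ≥ M + δ := by
    calc M + δ ≤ gromovProd x (a m) (b m) := hN2 m hm2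
    _ ≤ gromovProd x (a m) (w m) := hwa m
  have := hhyp (w n) (a m) (w m)
  have hmin : min (gromovProd x (w n) (a m)) (gromovProd x (a m) (w m)) ≥ M + δ :=
    le_min h1 h2
  linarith
end
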